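/- arXiv:2409.17250 — 6 statements merged into one kernel-verified Lean document; each statement's English description precedes it below -/
import Mathlib

section
/- If a graph G has a dominating set of size at most k, then the diameter of G is at most 3k + 2; in particular any two vertices of a connected graph with domination number at most k are at distance at most 3k + 2. -/
open SimpleGraph

lemma length_drop_aux {V : Type} {G : SimpleGraph V} :
    ∀ {u v : V} (p : G.Walk u v) (n : ℕ), (p.drop n).length = p.length - n := by
  intro u v p
  induction p with
  | nil => intro n; cases n <;> simp [SimpleGraph.Walk.drop]
  | cons h q ih =>
    intro n
    cases n with
    | zero => simp [SimpleGraph.Walk.drop]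
    | succ m => simp [SimpleGraph.Walk.drop, ih m]

lemma dist_getVert_right {V : Type} {G : SimpleGraph V} {u v : V} (p : G.Walk u v) (n : ℕ) :
    G.dist (p.getVert n) v ≤ p.length - n := by
  have := SimpleGraph.dist_le (p.drop n)
  simpa [length_drop_aux] using this

lemma dist_getVert_left {V : Type} {G : SimpleGraph V} {u v : V} (p : G.Walk u v) (n : ℕ)
    (hn : n ≤ p.length) : G.dist u (p.getVert n) ≤ n := by
  have h := SimpleGraph.dist_le (p.reverse.drop (p.length - n))
  rw [length_drop_aux, SimpleGraph.Walk.length_reverse] at h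
  rw [SimpleGraph.Walk.getVert_reverse] at h
  have hnn : p.length - (p.length - n) = n := by omega
  rw [hnn] at h
  rw [SimpleGraph.dist_comm]
  exact h

lemma getVert_dist_ge {V : Type} {G : SimpleGraph V} (hG : G.Connected) {u v : V}
    (p : G.Walk u v) (hp : p.length = G.dist u v) {i j : ℕ} (hij : i ≤ j)
    (hj : j ≤ p.length) : j - i ≤ G.dist (p.getVert i) (p.getVert j) := by
  have h1 : G.dist u (p.getVert i) ≤ i := dist_getVert_left p i (le_trans hij hj)
  have h2 : G.dist (p.getVert j) v ≤ p.length - j := dist_getVert_right p j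
  have h3 : G.dist u v ≤ G.dist u (p.getVert i) + G.dist (p.getVert i) v :=
    hG.dist_triangle
  have h4 : G.dist (p.getVert i) v ≤
      G.dist (p.getVert i) (p.getVert j) + G.dist (p.getVert j) v := hG.dist_triangle
  omega

/-- If a connected graph `G` has a dominating set of size at most `k`, then any two
vertices of `G` are at distance at most `3k + 2`; i.e. the diameter is at most `3k + 2`. -/
theorem dist_le_of_dominatingSet {V : Type} [Fintype V] (G : SimpleGraph V)
    (hG : G.Connected) (k : ℕ) (D : Finset V)
    (hdom : ∀ v : V, ∃ d ∈ D, d = v ∨ G.Adj d v)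
    (hcard : D.card ≤ k) :
    ∀ u v : V, G.dist u v ≤ 3 * k + 2 := by
  intro u v
  by_contra hlt
  push_neg at hlt
  obtain ⟨p, hp⟩ := hG.exists_walk_length_eq_dist u v
  have hL : 3 * k + 2 < p.length := by omega
  -- dominator of each vertex
  choose f hfD hf using hdom
  -- distance from dominator at most 1
  have hdist1 : ∀ x : V, G.dist (f x) x ≤ 1 := by
    intro x
    rcases hf x with h | h
    · simp [h, SimpleGraph.dist_self]
    · exact SimpleGraph.dist_le h.toWalk
  set g : Fin (k + 1) → V := fun i => f (p.getVert (3 * i)) with hg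
  have hinj : Function.Injective g := by
    intro i j hgij
    by_contra hne
    wlog hij : (i : ℕ) < (j : ℕ) generalizing i j
    · exact this hgij.symm (Ne.symm hne) (by omega)
    have hjle : 3 * (j : ℕ) ≤ p.length := by
      have : (j : ℕ) ≤ k := by omega
      omega
    have h3 : 3 * (j : ℕ) - 3 * (i : ℕ) ≤
        G.dist (p.getVert (3 * i)) (p.getVert (3 * j)) :=
      getVert_dist_ge hG p hp (by omega) hjle
    have h4 : G.dist (p.getVert (3 * i)) (p.getVert (3 * j)) ≤
        G.dist (p.getVert (3 * i)) (g i) + G.dist (g i) (p.getVert (3 * j)) :=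
      hG.dist_triangle
    have h5 : G.dist (p.getVert (3 * i)) (g i) ≤ 1 := by
      rw [SimpleGraph.dist_comm]; exact hdist1 _
    have h6 : G.dist (g i) (p.getVert (3 * j)) ≤ 1 := by
      rw [hgij]; exact hdist1 _
    omega
  have hmaps : ∀ i : Fin (k + 1), g i ∈ D := fun i => hfD _
  have : (Finset.univ : Finset (Fin (k + 1))).card ≤ D.card :=
    Finset.card_le_card_of_injOn g (fun i _ => hmaps i) (hinj.injOn)
  simp at this
  omega
end

section
/- A shortest path on 3k + 3 vertices cannot be dominated by k vertices: if P is a path with 3k+3 vertices that is an isometric (distance-preserving) subgraph of a graph G, then no set of k vertices of G dominates all vertices of P. -/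
open SimpleGraph

private lemma dom_dist_le {V : Type} (G : SimpleGraph V) {s a b : V}
    (ha : s = a ∨ G.Adj s a) (hb : s = b ∨ G.Adj s b) : G.dist a b ≤ 2 := by
  rcases ha with rfl | ha
  · rcases hb with rfl | hb
    · simp [SimpleGraph.dist_self]
    · calc G.dist s b ≤ (hb.toWalk).length := G.dist_le _
        _ ≤ 2 := by simp
  · rcases hb with rfl | hb
    · calc G.dist a s ≤ (ha.symm.toWalk).length := G.dist_le _
        _ ≤ 2 := by simp
    · calc G.dist a b ≤ ((ha.symm.toWalk).append hb.toWalk).length := G.dist_le _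
        _ ≤ 2 := by simp

/-- A shortest (isometric) path on `3k + 3` vertices cannot be dominated by `k` vertices:
if `p` enumerates a path whose vertices are at pairwise graph distance `|i - j|`, then no
set `S` of at most `k` vertices dominates every vertex of the path. -/
theorem not_dominated_isometric_path {V : Type} [Fintype V] (G : SimpleGraph V) (k : ℕ)
    (p : Fin (3 * k + 3) → V)
    (hiso : ∀ i j : Fin (3 * k + 3), G.dist (p i) (p j) = Nat.dist (i : ℕ) (j : ℕ))
    (S : Finset V) (hS : S.card ≤ k) :
    ¬ (∀ i : Fin (3 * k + 3), ∃ s ∈ S, s = p i ∨ G.Adj s (p i)) := by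
  classical
  intro h
  choose f hfS hfd using h
  have key : (Finset.univ : Finset (Fin (3 * k + 3))).card
      = ∑ s ∈ S, (Finset.univ.filter fun i => f i = s).card :=
    Finset.card_eq_sum_card_fiberwise (fun i _ => hfS i)
  have fib : ∀ s ∈ S, (Finset.univ.filter fun i => f i = s).card ≤ 3 := by
    intro s _
    set T := Finset.univ.filter fun i => f i = s with hT
    rcases T.eq_empty_or_nonempty with he | hne
    · simp [he]
    · have hdist : ∀ i ∈ T, ∀ j ∈ T, Nat.dist (i : ℕ) (j : ℕ) ≤ 2 := by
        intro i hi j hj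
        rw [← hiso i j]
        simp only [hT, Finset.mem_filter] at hi hj
        exact dom_dist_le G (hi.2 ▸ hfd i) (hj.2 ▸ hfd j)
      set m := T.min' hne with hm
      have hmT : m ∈ T := T.min'_mem hne
      have hsub : T.image (Fin.val) ⊆ Finset.Icc (m : ℕ) ((m : ℕ) + 2) := by
        intro x hx
        simp only [Finset.mem_image] at hx
        obtain ⟨i, hi, rfl⟩ := hx
        have h1 : m ≤ i := T.min'_le i hi
        have h2 : Nat.dist (m : ℕ) (i : ℕ) ≤ 2 := hdist m hmT i hi
        simp only [Nat.dist] at h2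
        have : (m : ℕ) ≤ i := h1
        simp only [Finset.mem_Icc]
        omega
      have := Finset.card_le_card hsub
      rw [Finset.card_image_of_injective _ Fin.val_injective, Nat.card_Icc] at this
      omega
  have : 3 * k + 3 ≤ 3 * k := by
    calc 3 * k + 3 = (Finset.univ : Finset (Fin (3 * k + 3))).card := by simp
      _ = _ := key
      _ ≤ ∑ _s ∈ S, 3 := Finset.sum_le_sum fib
      _ = 3 * S.card := by rw [Finset.sum_const]; ring
      _ ≤ 3 * k := by omega
  omega
end

section
/- Sunflower lemma: Let A be a finite family of distinct sets each of cardinality at most d over a universe U. If |A| > d! · (p − 1)^d, then A contains a sunflower with p petals, i.e., p sets F_1, …, F_p in A and a core Y such that F_i ∩ F_j = Y for all i ≠ j. -/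
/-!
Induction on `d`. Put `M = d! (p-1)^d`. If some point `x` lies in more than `M` members of `A`,
the sets of `A` through `x`, with `x` removed, have size at most `d`; by induction they contain a
sunflower with `p` petals, and adding `x` back to each petal and to the core gives one in `A`.
Otherwise every member `F` of `A` meets at most `|F| M ≤ (d+1) M` members of `A`, so choosing sets
greedily and discarding those they meet yields `p` pairwise disjoint sets, a sunflower with empty
core, because `|A| > (p-1) (d+1) M`.
-/

open Finset Nat

variable {α : Type*} [DecidableEq α]

namespace Finset

def IsSunflower (S : Finset (Finset α)) : Prop :=
  ∃ Y : Finset α, (S : Set (Finset α)).Pairwise fun F G => F ∩ G = Y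

theorem exists_pairwise_of_mul_lt_card {β : Type*} [DecidableEq β] {r : β → β → Prop}
    [DecidableRel r] [Std.Symm r] {B : ℕ} (k : ℕ) {A : Finset β}
    (hB : ∀ a ∈ A, #{b ∈ A | b = a ∨ ¬r a b} ≤ B) (hA : k * B < #A) :
    ∃ S ⊆ A, #S = k + 1 ∧ (S : Set β).Pairwise r := by
  induction k generalizing A with
  | zero =>
    obtain ⟨a, ha⟩ := card_pos.1 (by simpa using hA)
    exact ⟨{a}, singleton_subset_iff.2 ha, card_singleton a, by simp⟩
  | succ k ih =>
    obtain ⟨a, ha⟩ := card_pos.1 (by lia : 0 < #A)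
    set A' := {b ∈ A | ¬(b = a ∨ ¬r a b)}
    have hA' : k * B < #A' := by
      have := card_filter_add_card_filter_not (s := A) (fun b => b = a ∨ ¬r a b)
      have := hB a ha
      rw [add_mul, one_mul] at hA
      lia
    have hB' : ∀ b ∈ A', #{c ∈ A' | c = b ∨ ¬r b c} ≤ B := fun b hb =>
      (card_le_card (filter_subset_filter _ (filter_subset _ A))).trans
        (hB b (filter_subset _ A hb))
    obtain ⟨S, hSA', hS, hSr⟩ := ih hB' hA'
    have hS_mem (b : β) (hb : b ∈ S) : b ≠ a ∧ r a b := by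
      simpa [A', not_or] using (mem_filter.1 (hSA' hb)).2
    have haS : a ∉ S := fun h => (hS_mem a h).1 rfl
    refine ⟨insert a S, insert_subset ha (hSA'.trans (filter_subset _ A)), ?_, ?_⟩
    · rw [card_insert_of_notMem haS, hS]
    · rw [coe_insert, Set.pairwise_insert_of_symm_of_notMem (mem_coe.not.2 haS)]
      exact ⟨hSr, fun b hb => (hS_mem b hb).2⟩

theorem card_memberSubfamily (a : α) (A : Finset (Finset α)) :
    #(A.memberSubfamily a) = #{s ∈ A | a ∈ s} :=
  card_image_of_injOn ((erase_injOn' a).mono fun _ hs => (mem_filter.1 hs).2)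

-- The `max 1` is for `F = ∅`, which meets no set but is still discarded with itself.
theorem card_filter_eq_or_not_disjoint_le {A : Finset (Finset α)} {M : ℕ} {F : Finset α}
    (hM : ∀ x ∈ F, #(A.memberSubfamily x) ≤ M) :
    #{G ∈ A | G = F ∨ ¬Disjoint F G} ≤ max 1 (#F * M) := by
  rcases F.eq_empty_or_nonempty with rfl | hF
  · refine le_max_of_le_left (card_le_one.2 fun G hG G' hG' => ?_)
    simp only [mem_filter, disjoint_empty_left, not_true_eq_false, or_false] at hG hG'
    rw [hG.2, hG'.2]
  refine le_max_of_le_right ?_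
  calc #{G ∈ A | G = F ∨ ¬Disjoint F G}
      ≤ #(F.biUnion fun x => {G ∈ A | x ∈ G}) := by
        refine card_le_card fun G hG => ?_
        obtain ⟨hGA, rfl | hFG⟩ := mem_filter.1 hG
        · obtain ⟨x, hx⟩ := hF
          exact mem_biUnion.2 ⟨x, hx, mem_filter.2 ⟨hGA, hx⟩⟩
        · obtain ⟨x, hxF, hxG⟩ := not_disjoint_iff.1 hFG
          exact mem_biUnion.2 ⟨x, hxF, mem_filter.2 ⟨hGA, hxG⟩⟩
    _ ≤ ∑ x ∈ F, #{G ∈ A | x ∈ G} := card_biUnion_le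
    _ ≤ #F * M := by
        simpa [card_memberSubfamily] using sum_le_card_nsmul F _ M hM

theorem IsSunflower.image_insert {S : Finset (Finset α)} (hS : S.IsSunflower) {x : α}
    (hx : ∀ G ∈ S, x ∉ G) : (S.image (insert x)).IsSunflower := by
  obtain ⟨Y, hY⟩ := hS
  have hinj : Set.InjOn (insert x) (S : Set (Finset α)) :=
    insert_erase_invOn.2.injOn.mono fun G hG => hx G hG
  refine ⟨insert x Y, ?_⟩
  rw [coe_image, hinj.pairwise_image]
  exact hY.mono' fun G G' h => by simp only [Function.onFun, ← insert_inter_distrib, h]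

theorem exists_isSunflower_of_memberSubfamily {A : Finset (Finset α)} {p : ℕ} {x : α}
    (h : ∃ S ⊆ A.memberSubfamily x, #S = p ∧ S.IsSunflower) :
    ∃ S ⊆ A, #S = p ∧ S.IsSunflower := by
  obtain ⟨S, hSA, rfl, hS⟩ := h
  have hx (G : Finset α) (hG : G ∈ S) : insert x G ∈ A ∧ x ∉ G := mem_memberSubfamily.1 (hSA hG)
  refine ⟨S.image (insert x), fun F hF => ?_, ?_, hS.image_insert fun G hG => (hx G hG).2⟩
  · obtain ⟨G, hG, rfl⟩ := mem_image.1 hF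
    exact (hx G hG).1
  · exact card_image_of_injOn (insert_erase_invOn.2.injOn.mono fun G hG => (hx G hG).2)

theorem exists_isSunflower {p : ℕ} (hp : 2 ≤ p) (d : ℕ) {A : Finset (Finset α)}
    (hd : ∀ F ∈ A, #F ≤ d) (hA : d ! * (p - 1) ^ d < #A) :
    ∃ S ⊆ A, #S = p ∧ S.IsSunflower := by
  induction d generalizing A with
  | zero =>
    have : #A ≤ 1 := card_le_one.2 fun F hF G hG => by
      rw [card_eq_zero.1 (Nat.le_zero.1 (hd F hF)), card_eq_zero.1 (Nat.le_zero.1 (hd G hG))]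
    rw [factorial_zero, pow_zero, mul_one] at hA
    lia
  | succ d ih =>
    set M := d ! * (p - 1) ^ d
    by_cases hdeg : ∃ x, M < #(A.memberSubfamily x)
    · obtain ⟨x, hx⟩ := hdeg
      refine exists_isSunflower_of_memberSubfamily (x := x) (ih (fun G hG => ?_) hx)
      obtain ⟨hGA, hxG⟩ := mem_memberSubfamily.1 hG
      have := hd _ hGA
      rw [card_insert_of_notMem hxG] at this
      lia
    push Not at hdeg
    obtain ⟨k, rfl⟩ : ∃ k, p = k + 1 := ⟨p - 1, by lia⟩
    have hM : 1 ≤ (d + 1) * M :=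
      Nat.mul_pos d.succ_pos (Nat.mul_pos (factorial_pos d) (pow_pos (by lia) d))
    have hB (F : Finset α) (hF : F ∈ A) : #{G ∈ A | G = F ∨ ¬Disjoint F G} ≤ (d + 1) * M :=
      (card_filter_eq_or_not_disjoint_le fun x _ => hdeg x).trans
        (max_le hM (Nat.mul_le_mul_right M (hd F hF)))
    have hk : k * ((d + 1) * M) < #A := by
      convert hA using 1
      simp only [M, Nat.add_sub_cancel, factorial_succ, pow_succ]
      ring
    obtain ⟨S, hSA, hS, hdisj⟩ := exists_pairwise_of_mul_lt_card k hB hk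
    exact ⟨S, hSA, hS, ∅, hdisj.mono' fun F G h => disjoint_iff_inter_eq_empty.1 h⟩

end Finset

/-- Sunflower lemma (Erdős–Rado): a family of more than `d! * (p - 1)^d` distinct sets,
each of cardinality at most `d`, contains a sunflower with `p` petals, i.e. `p` sets whose
pairwise intersections all equal a common core `Y`. -/
theorem sunflower_lemma {α : Type} [DecidableEq α] (d p : ℕ) (A : Finset (Finset α))
    (hd : ∀ F ∈ A, F.card ≤ d)
    (hA : Nat.factorial d * (p - 1) ^ d < A.card) :
    ∃ S ⊆ A, S.card = p ∧ ∃ Y : Finset α,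
      ∀ F ∈ S, ∀ F' ∈ S, F ≠ F' → F ∩ F' = Y := by
  rcases le_or_gt 2 p with hp | hp
  · exact exists_isSunflower hp d hd hA
  have hA_pos : 0 < #A := (Nat.zero_le _).trans_lt hA
  obtain ⟨S, hSA, hS⟩ := exists_subset_card_eq (show p ≤ #A by lia)
  have hS_le : #S ≤ 1 := by lia
  exact ⟨S, hSA, hS, ∅, fun F hF G hG hFG => absurd (card_le_one.1 hS_le F hF G hG) hFG⟩
end

section
/- Irrelevant-petal lemma for independent sets: Let G be a graph, k a positive integer, and let v_1, …, v_t be vertices of G such that the closed neighborhoods N[v_1], …, N[v_t] form a sunflower with core Y (i.e., N[v_i] ∩ N[v_j] = Y for all i ≠ j) with t ≥ k + 1. Then for every independent set I of G of size at most k with v_1 ∈ I, there exists an index j ≥ 2 such that (I \ {v_1}) ∪ {v_j} is also an independent set of G of size |I|. -/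
open SimpleGraph

/-!
Let `J = I \ {v i₀}`. A vertex of `J` lying in two petals `N[v j]`, `N[v j']` lies in the core,
hence in `N[v i₀]`, which is impossible as `I` is independent. So each vertex of `J` meets at
most one of the `t - 1 ≥ k` petals other than `N[v i₀]`, and since `|J| ≤ k - 1` some petal
`N[v j]` misses `J` entirely; then `v j` can take the place of `v i₀`.
-/

theorem mem_of_mem_of_mem_of_pairwise_inter_eq {ι α : Type*} {P : ι → Set α} {Y : Set α}
    (hP : ∀ i j, i ≠ j → P i ∩ P j = Y) {i j j' : ι} (hij : i ≠ j) (hjj' : j ≠ j') {a : α}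
    (ha : a ∈ P j) (ha' : a ∈ P j') : a ∈ P i := by
  have haY : a ∈ Y := hP j j' hjj' ▸ ⟨ha, ha'⟩
  exact (hP i j hij ▸ haY).1

theorem Finset.exists_forall_notMem_of_card_lt {ι α : Type*} {s : Finset ι} {J : Finset α}
    {P : ι → Set α} (hJ : ∀ a ∈ J, ∀ j ∈ s, ∀ j' ∈ s, a ∈ P j → a ∈ P j' → j = j')
    (hcard : J.card < s.card) : ∃ j ∈ s, ∀ a ∈ J, a ∉ P j := by
  by_contra! h
  exact hcard.not_ge <| Finset.card_le_card_of_forall_subsingleton (fun j a ↦ a ∈ P j) h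
    fun a ha j hj j' hj' ↦ hJ a ha j hj.1 j' hj'.1 hj.2 hj'.2

theorem SimpleGraph.forall_not_adj_insert {V : Type*} [DecidableEq V] {G : SimpleGraph V}
    {s : Finset V} (hs : ∀ a ∈ s, ∀ b ∈ s, ¬G.Adj a b) {x : V} (hx : ∀ a ∈ s, ¬G.Adj x a) :
    ∀ a ∈ insert x s, ∀ b ∈ insert x s, ¬G.Adj a b := by
  intro a ha b hb
  rcases Finset.mem_insert.mp ha with rfl | has <;> rcases Finset.mem_insert.mp hb with rfl | hbs
  · exact G.irrefl
  · exact hx b hbs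
  · exact fun hab ↦ hx a has hab.symm
  · exact hs a has b hbs

theorem irrelevant_petal_independentSet_general {V : Type} [DecidableEq V] (G : SimpleGraph V)
    (k t : ℕ) (ht : k + 1 ≤ t)
    (v : Fin t → V)
    (Y : Set V)
    (hsun : ∀ i j : Fin t, i ≠ j →
      (insert (v i) (G.neighborSet (v i))) ∩ (insert (v j) (G.neighborSet (v j))) = Y)
    (I : Finset V)
    (hind : ∀ a ∈ I, ∀ b ∈ I, ¬ G.Adj a b)
    (hIcard : I.card ≤ k)
    (i₀ : Fin t) (hi₀ : v i₀ ∈ I) :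
    ∃ j : Fin t, j ≠ i₀ ∧
      (∀ a ∈ insert (v j) (I.erase (v i₀)), ∀ b ∈ insert (v j) (I.erase (v i₀)),
        ¬ G.Adj a b) ∧
      (insert (v j) (I.erase (v i₀))).card = I.card := by
  set J := I.erase (v i₀)
  have hJ_petal : ∀ a ∈ J, ∀ j ∈ Finset.univ.erase i₀, ∀ j' ∈ Finset.univ.erase i₀,
      a ∈ insert (v j) (G.neighborSet (v j)) → a ∈ insert (v j') (G.neighborSet (v j')) →
        j = j' := by
    intro a ha j hj j' _ haj haj'
    by_contra hjj'
    have hai₀ := mem_of_mem_of_mem_of_pairwise_inter_eq hsun (Finset.ne_of_mem_erase hj).symm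
      hjj' haj haj'
    obtain ⟨hne, haI⟩ := Finset.mem_erase.mp ha
    rcases hai₀ with h | h
    · exact hne h
    · exact hind _ hi₀ a haI h
  have hJcard : J.card < (Finset.univ.erase i₀).card := by
    rw [Finset.card_erase_of_mem hi₀, Finset.card_erase_of_mem (Finset.mem_univ _),
      Finset.card_univ, Fintype.card_fin]
    have := Finset.card_pos.mpr ⟨_, hi₀⟩
    omega
  obtain ⟨j, hj, hjJ⟩ := Finset.exists_forall_notMem_of_card_lt hJ_petal hJcard
  have hvj : v j ∉ J := fun h ↦ hjJ _ h (Set.mem_insert _ _)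
  refine ⟨j, Finset.ne_of_mem_erase hj, ?_, ?_⟩
  · exact forall_not_adj_insert (fun a ha b hb ↦ hind a (Finset.mem_of_mem_erase ha) b
      (Finset.mem_of_mem_erase hb)) fun a ha hadj ↦ hjJ a ha (Set.mem_insert_of_mem _ hadj)
  · rw [Finset.card_insert_of_notMem hvj, Finset.card_erase_add_one hi₀]

/-- Irrelevant-petal lemma for independent sets: if the closed neighborhoods of distinct
vertices `v 0, …, v (t-1)` form a sunflower with core `Y` and `t ≥ k + 1` petals, then for
every independent set `I` of size at most `k` containing `v i₀`, some other petal vertex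
`v j` can replace `v i₀` in `I`, preserving independence and cardinality. -/
theorem irrelevant_petal_independentSet {V : Type} [DecidableEq V] (G : SimpleGraph V)
    (k t : ℕ) (hk : 1 ≤ k) (ht : k + 1 ≤ t)
    (v : Fin t → V) (hinj : Function.Injective v)
    (Y : Set V)
    (hsun : ∀ i j : Fin t, i ≠ j →
      (insert (v i) (G.neighborSet (v i))) ∩ (insert (v j) (G.neighborSet (v j))) = Y)
    (I : Finset V)
    (hind : ∀ a ∈ I, ∀ b ∈ I, ¬ G.Adj a b)
    (hIcard : I.card ≤ k)
    (i₀ : Fin t) (hi₀ : v i₀ ∈ I) :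
    ∃ j : Fin t, j ≠ i₀ ∧
      (∀ a ∈ insert (v j) (I.erase (v i₀)), ∀ b ∈ insert (v j) (I.erase (v i₀)),
        ¬ G.Adj a b) ∧
      (insert (v j) (I.erase (v i₀))).card = I.card :=
  irrelevant_petal_independentSet_general G k t ht v Y hsun I hind hIcard i₀ hi₀
end

section
/- Vertex cover kernel size bound: Let G be a graph that has a vertex cover of size at most k, and let G' be the graph obtained from G by deleting all vertices of degree greater than k. Then G' has at most k² edges and at most 2k² non-isolated vertices. -/
open SimpleGraph Finset

namespace SimpleGraph

variable {W : Type*} {H : SimpleGraph W}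

theorem ncard_incidenceSet_eq_degree (v : W) [Fintype (H.neighborSet v)] :
    (H.incidenceSet v).ncard = H.degree v := by
  classical
  rw [← Nat.card_coe_set_eq, Nat.card_congr (H.incidenceSetEquivNeighborSet v),
    Nat.card_eq_fintype_card, card_neighborSet_eq_degree]

theorem ncard_neighborSet_eq_degree (v : W) [Fintype (H.neighborSet v)] :
    (H.neighborSet v).ncard = H.degree v := by
  rw [← Nat.card_coe_set_eq, Nat.card_eq_fintype_card, card_neighborSet_eq_degree]

variable [H.LocallyFinite] {c : Finset W} {d : ℕ}

theorem IsVertexCover.ncard_edgeSet_le (hc : H.IsVertexCover c)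
    (hd : ∀ v ∈ c, H.degree v ≤ d) : H.edgeSet.ncard ≤ #c * d := by
  classical
  have hsub : H.edgeSet ⊆ ⋃ v ∈ c, H.incidenceSet v := by
    rintro ⟨u, w⟩ huw
    simp only [Set.mem_iUnion]
    rcases hc huw with hu | hw
    · exact ⟨u, hu, huw, Sym2.mem_mk_left u w⟩
    · exact ⟨w, hw, huw, Sym2.mem_mk_right u w⟩
  have hfin : (⋃ v ∈ c, H.incidenceSet v).Finite :=
    c.finite_toSet.biUnion fun v _ ↦ Set.toFinite _
  calc H.edgeSet.ncard ≤ (⋃ v ∈ c, H.incidenceSet v).ncard := Set.ncard_le_ncard hsub hfin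
    _ ≤ ∑ v ∈ c, (H.incidenceSet v).ncard := c.set_ncard_biUnion_le _
    _ ≤ ∑ _v ∈ c, d := sum_le_sum fun v hv ↦ (ncard_incidenceSet_eq_degree v).trans_le (hd v hv)
    _ = #c * d := by rw [sum_const, smul_eq_mul]

theorem IsVertexCover.ncard_support_le (hc : H.IsVertexCover c)
    (hd : ∀ v ∈ c, H.degree v ≤ d) : H.support.ncard ≤ #c * (d + 1) := by
  have hsub : H.support ⊆ ↑c ∪ ⋃ v ∈ c, H.neighborSet v := by
    rintro u ⟨w, huw⟩
    rcases hc huw with hu | hw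
    · exact Or.inl hu
    · exact Or.inr (Set.mem_biUnion hw huw.symm)
  have hfin : (↑c ∪ ⋃ v ∈ c, H.neighborSet v).Finite :=
    c.finite_toSet.union (c.finite_toSet.biUnion fun v _ ↦ Set.toFinite _)
  calc H.support.ncard ≤ (↑c ∪ ⋃ v ∈ c, H.neighborSet v).ncard := Set.ncard_le_ncard hsub hfin
    _ ≤ #c + ∑ v ∈ c, (H.neighborSet v).ncard :=
      (Set.ncard_union_le _ _).trans (by rw [Set.ncard_coe_finset]; grw [c.set_ncard_biUnion_le])
    _ ≤ #c + ∑ _v ∈ c, d := by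
      gcongr with v hv
      exact (ncard_neighborSet_eq_degree v).trans_le (hd v hv)
    _ = #c * (d + 1) := by rw [sum_const, smul_eq_mul, mul_add_one, add_comm]

end SimpleGraph

theorem vertexCover_kernel_bound_general {V : Type} [Fintype V]
    (G : SimpleGraph V) [DecidableRel G.Adj] (k : ℕ) (C : Finset V)
    (hvc : ∀ u v : V, G.Adj u v → u ∈ C ∨ v ∈ C) (hC : C.card ≤ k) :
    (SimpleGraph.induce {v : V | G.degree v ≤ k} G).edgeSet.ncard ≤ k ^ 2 ∧
    {x : {v : V | G.degree v ≤ k} |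
        ∃ y, (SimpleGraph.induce {v : V | G.degree v ≤ k} G).Adj x y}.ncard ≤ 2 * k ^ 2 := by
  classical
  set S := {v : V | G.degree v ≤ k}
  set C' := C.subtype (· ∈ S)
  have hcover : (G.induce S).IsVertexCover C' := by
    convert IsVertexCover.preimage (Embedding.induce S) (c := (C : Set V)) (fun u v ↦ hvc u v)
    ext v
    simp [C']
  have hcard : #C' ≤ k := by simpa [C'] using (card_filter_le C _).trans hC
  have hdeg (v : S) (_ : v ∈ C') : (G.induce S).degree v ≤ k :=
    ((Embedding.induce S).toCopy.degree_le v).trans v.2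
  constructor
  · calc _ ≤ #C' * k := hcover.ncard_edgeSet_le hdeg
      _ ≤ k ^ 2 := by nlinarith
  · calc _ ≤ #C' * (k + 1) := hcover.ncard_support_le hdeg
      _ ≤ 2 * k ^ 2 := by nlinarith

/-- Vertex cover kernel size bound: if `G` has a vertex cover of size at most `k` and `G'`
is the subgraph of `G` induced by the vertices of degree at most `k`, then `G'` has at most
`k²` edges and at most `2k²` non-isolated vertices. -/
theorem vertexCover_kernel_bound {V : Type} [Fintype V] [DecidableEq V]
    (G : SimpleGraph V) [DecidableRel G.Adj] (k : ℕ) (C : Finset V)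
    (hvc : ∀ u v : V, G.Adj u v → u ∈ C ∨ v ∈ C) (hC : C.card ≤ k) :
    (SimpleGraph.induce {v : V | G.degree v ≤ k} G).edgeSet.ncard ≤ k ^ 2 ∧
    {x : {v : V | G.degree v ≤ k} |
        ∃ y, (SimpleGraph.induce {v : V | G.degree v ≤ k} G).Adj x y}.ncard ≤ 2 * k ^ 2 :=
  vertexCover_kernel_bound_general G k C hvc hC
end

section
/- Distance-3k relevance for independent set discovery: Let G be a graph, S a set of k ≥ 1 token positions, and suppose I is an independent set of G of size k reachable from S. If some target vertex u ∈ I satisfies dist_G(s,u) > 3k for the token starting at s ∈ S assigned to u, then there exists a vertex v with dist_G(s,v) ≤ 3k such that (I \ {u}) ∪ {v} is also an independent set of size k. In particular, on a connected graph G with |V(G)| > (3k)·k, for every s ∈ S and every independent set I of size k containing a vertex at distance > 3k from s, a replacement at distance ≤ 3k exists. -/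
/-!
Vertices in the same or in consecutive distance classes `V(s, i)` are the only ones that can
coincide or be adjacent. The `k - 1` vertices of `I \ {u}` therefore block at most `3(k - 1)`
of the `3k + 1` classes `V(s, 0), …, V(s, 3k)`, and each of these classes is nonempty because
a shortest `s`–`u` path crosses all of them. Any vertex of an unblocked class replaces `u`.
-/

open SimpleGraph Finset

namespace SimpleGraph

variable {V : Type} {G : SimpleGraph V}

theorem Reachable.exists_dist_eq_of_le {s u : V} (h : G.Reachable s u) {i : ℕ}
    (hi : i ≤ G.dist s u) : ∃ v, G.dist s v = i := by
  obtain ⟨p, hp⟩ := h.exists_walk_length_eq_dist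
  refine ⟨p.getVert i, le_antisymm ?_ ?_⟩
  · exact (dist_le (p.take i)).trans (by simp [Walk.take_length])
  · have htri := (p.take i).reachable.dist_triangle_left u
    have hdrop : G.dist (p.getVert i) u ≤ p.length - i := by
      simpa [Walk.drop_length] using dist_le (p.drop i)
    omega

theorem ne_and_not_adj_of_dist_far {s v w : V}
    (h : G.dist s v + 1 < G.dist s w ∨ G.dist s w + 1 < G.dist s v) :
    v ≠ w ∧ ¬G.Adj v w := by
  refine ⟨by rintro rfl; omega, fun hadj => ?_⟩
  rcases hadj.diff_dist_adj (u := s) with h' | h' | h' <;> omega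

theorem insert_forall_not_adj [DecidableEq V] {J : Finset V} {v : V}
    (hJ : ∀ a ∈ J, ∀ b ∈ J, ¬G.Adj a b) (hv : ∀ w ∈ J, ¬G.Adj v w) :
    ∀ a ∈ insert v J, ∀ b ∈ insert v J, ¬G.Adj a b := by
  intro a ha b hb
  rcases mem_insert.mp ha with rfl | haJ
  · rcases mem_insert.mp hb with rfl | hbJ
    exacts [G.loopless.irrefl _, hv _ hbJ]
  · rcases mem_insert.mp hb with rfl | hbJ
    exacts [fun hab => hv _ haJ hab.symm, hJ _ haJ _ hbJ]

end SimpleGraph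

theorem Finset.exists_le_far_from_image {α : Type} (J : Finset α) (f : α → ℕ) {n : ℕ}
    (hn : 3 * #J ≤ n) : ∃ i ≤ n, ∀ w ∈ J, i + 1 < f w ∨ f w + 1 < i := by
  classical
  set blocked := J.biUnion fun w => Icc (f w - 1) (f w + 1)
  have hblocked : #blocked < #(range (n + 1)) := by
    calc #blocked ≤ ∑ w ∈ J, #(Icc (f w - 1) (f w + 1)) := card_biUnion_le
      _ ≤ ∑ _w ∈ J, 3 := sum_le_sum fun w _ => by simp only [Nat.card_Icc]; omega
      _ < #(range (n + 1)) := by simp only [sum_const, smul_eq_mul, card_range]; omega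
  obtain ⟨i, hi, hiB⟩ := exists_mem_notMem_of_card_lt_card hblocked
  refine ⟨i, Nat.lt_succ_iff.mp (mem_range.mp hi), fun w hw => ?_⟩
  have : i ∉ Icc (f w - 1) (f w + 1) := fun h => hiB (mem_biUnion.mpr ⟨w, hw, h⟩)
  simp only [mem_Icc, not_and_or, not_le] at this
  omega

theorem independentSet_replacement_within_distance_general {V : Type} [DecidableEq V]
    (G : SimpleGraph V) (hG : G.Connected) (k : ℕ)
    (s : V) (I : Finset V)
    (hind : ∀ a ∈ I, ∀ b ∈ I, ¬ G.Adj a b) (hcard : I.card = k)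
    (u : V) (hu : u ∈ I) (hdist : 3 * k < G.dist s u) :
    ∃ v : V, G.dist s v ≤ 3 * k ∧
      (∀ a ∈ insert v (I.erase u), ∀ b ∈ insert v (I.erase u), ¬ G.Adj a b) ∧
      (insert v (I.erase u)).card = k := by
  obtain ⟨i, hi, hfar⟩ := (I.erase u).exists_le_far_from_image (G.dist s)
    (n := 3 * k) (by have := card_erase_le (s := I) (a := u); omega)
  obtain ⟨v, hv⟩ := (hG s u).exists_dist_eq_of_le (i := i) (by omega)
  have hvJ : ∀ w ∈ I.erase u, v ≠ w ∧ ¬G.Adj v w := fun w hw =>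
    ne_and_not_adj_of_dist_far (s := s) (by have := hfar w hw; omega)
  have hvnot : v ∉ I.erase u := fun h => (hvJ v h).1 rfl
  refine ⟨v, hv ▸ hi, ?_, ?_⟩
  · exact insert_forall_not_adj (fun a ha b hb => hind a (mem_of_mem_erase ha) b
      (mem_of_mem_erase hb)) fun w hw => (hvJ w hw).2
  · rw [card_insert_of_notMem hvnot, card_erase_add_one hu, hcard]

/-- Distance-`3k` relevance for independent set discovery: on a connected graph with more
than `3k·k` vertices, if `I` is an independent set of size `k` containing a vertex `u` at
distance more than `3k` from `s`, then `u` can be replaced by some vertex `v` at distance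
at most `3k` from `s`, preserving independence and cardinality. -/
theorem independentSet_replacement_within_distance {V : Type} [Fintype V] [DecidableEq V]
    (G : SimpleGraph V) (hG : G.Connected) (k : ℕ) (hk : 1 ≤ k)
    (hV : 3 * k * k < Fintype.card V)
    (s : V) (I : Finset V)
    (hind : ∀ a ∈ I, ∀ b ∈ I, ¬ G.Adj a b) (hcard : I.card = k)
    (u : V) (hu : u ∈ I) (hdist : 3 * k < G.dist s u) :
    ∃ v : V, G.dist s v ≤ 3 * k ∧
      (∀ a ∈ insert v (I.erase u), ∀ b ∈ insert v (I.erase u), ¬ G.Adj a b) ∧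
      (insert v (I.erase u)).card = k :=
  independentSet_replacement_within_distance_general G hG k s I hind hcard u hu hdist
end
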